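/- Let v be an aperiodic infinite binary word such that the series Φ_ℝ(v) converges. For ℓ ≥ 1 let u_ℓ be the prefix of v of length ℓ and h(ℓ) its height. Then the sequence of rational numbers C(u_ℓ) = φ(u_ℓ)/(2^ℓ − 3^{h(ℓ)}) converges in ℝ to Φ_ℝ(v) as ℓ → ∞. -/

import Mathlib

/-- Height of a finite binary word: the number of `1`s (`true`s). -/
def wordHeight (u : List Bool) : ℕ := u.count true

/-- Auxiliary function realizing the recursion of `φ` on the reversed word. -/
def phiAux : List Bool → ℕ
  | [] => 0
  | b :: r => if b then 3 * phiAux r + 2 ^ r.length else phiAux r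

/-- The function `φ` on finite binary words: `φ(ε)=0`, `φ(u0)=φ(u)`,
`φ(u1)=3φ(u)+2^{ℓ(u)}`. -/
def phi (u : List Bool) : ℕ := phiAux u.reverse

/-- An infinite binary word is eventually periodic if for some period `p ≥ 1`
its digits satisfy `v (n+p) = v n` from some index on. -/
def EventuallyPeriodicWord (v : ℕ → Bool) : Prop :=
  ∃ p : ℕ, 0 < p ∧ ∃ N : ℕ, ∀ n ≥ N, v (n + p) = v n

/-- The position of the `i`-th `1` (0-indexed) of the infinite binary word `v`. -/
noncomputable def onePos (v : ℕ → Bool) (i : ℕ) : ℕ :=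
  Nat.nth (fun n => v n = true) i

/-- The `m`-th partial sum of the series `Φ_ℝ(v) = −∑_{i} 2^{d_i}/3^{i+1}`,
where `d_i` enumerates the positions of the `1`s of `v`. -/
noncomputable def phiPartial (v : ℕ → Bool) (m : ℕ) : ℝ :=
  -∑ i ∈ Finset.range m, (2 : ℝ) ^ onePos v i / 3 ^ (i + 1)

/-- The prefix of length `ℓ` of an infinite binary word `v`. -/
def wordPrefix (v : ℕ → Bool) (ℓ : ℕ) : List Bool := (List.range ℓ).map v

/-!
Write `h = h(ℓ)` and `d_i` for the position of the `i`-th one of `v`. Unfolding the recursion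
gives `φ(u_ℓ) = 3^h ∑_{i<h} 2^{d_i}/3^{i+1}`, so
`C(u_ℓ) = S_h / (1 - 2^ℓ/3^h)` with `S_m` the `m`-th partial sum of `Φ_ℝ(v)`.
Aperiodicity gives infinitely many ones, hence `h → ∞` and `S_h → Φ_ℝ(v)`. Since `ℓ ≤ d_h`,
`2^ℓ/3^h ≤ 3 (S_h - S_{h+1})`, and the right side tends to `0` because the series converges.
-/

open Filter

lemma phi_append (u : List Bool) (b : Bool) :
    phi (u ++ [b]) = if b then 3 * phi u + 2 ^ u.length else phi u := by
  simp [phi, phiAux]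

lemma wordPrefix_succ (v : ℕ → Bool) (ℓ : ℕ) :
    wordPrefix v (ℓ + 1) = wordPrefix v ℓ ++ [v ℓ] := by
  simp [wordPrefix, List.range_succ]

@[simp]
lemma length_wordPrefix (v : ℕ → Bool) (ℓ : ℕ) : (wordPrefix v ℓ).length = ℓ := by
  simp [wordPrefix]

lemma wordHeight_wordPrefix (v : ℕ → Bool) (ℓ : ℕ) :
    wordHeight (wordPrefix v ℓ) = Nat.count (fun n => v n = true) ℓ := by
  induction ℓ with
  | zero => simp [wordHeight, wordPrefix]
  | succ n ih =>
    rw [wordPrefix_succ, Nat.count_succ]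
    cases v n <;> simp [wordHeight, ← ih]

lemma eventuallyPeriodicWord_of_finite {v : ℕ → Bool} (hfin : {n | v n = true}.Finite) :
    EventuallyPeriodicWord v := by
  obtain ⟨N, hN⟩ := hfin.bddAbove
  have hzero : ∀ n > N, v n = false := fun n hn =>
    Bool.eq_false_iff.mpr fun h => absurd (hN h) (not_le.mpr hn)
  exact ⟨1, one_pos, N + 1, fun n hn => by rw [hzero n (by omega), hzero (n + 1) (by omega)]⟩

lemma infinite_setOf_of_not_eventuallyPeriodicWord {v : ℕ → Bool}
    (hv : ¬ EventuallyPeriodicWord v) : {n | v n = true}.Infinite :=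
  fun hfin => hv (eventuallyPeriodicWord_of_finite hfin)

lemma phiPartial_sub_phiPartial_succ (v : ℕ → Bool) (m : ℕ) :
    phiPartial v m - phiPartial v (m + 1) = (2 : ℝ) ^ onePos v m / 3 ^ (m + 1) := by
  simp [phiPartial, Finset.sum_range_succ]

lemma cast_phi_wordPrefix (v : ℕ → Bool) (ℓ : ℕ) :
    (phi (wordPrefix v ℓ) : ℝ) =
      -3 ^ Nat.count (fun n => v n = true) ℓ * phiPartial v (Nat.count (fun n => v n = true) ℓ) := by
  simp only [phiPartial, mul_neg, neg_mul, neg_neg]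
  induction ℓ with
  | zero => simp [phi, phiAux, wordPrefix]
  | succ n ih =>
    rw [wordPrefix_succ, phi_append, Nat.count_succ, length_wordPrefix]
    cases h : v n with
    | false => simpa [h] using ih
    | true =>
      have hpos : onePos v (Nat.count (fun n => v n = true) n) = n := Nat.nth_count h
      simp only [if_true, Nat.cast_add, Nat.cast_mul, Nat.cast_pow, Nat.cast_ofNat, ih,
        Finset.sum_range_succ, hpos]
      field_simp
      ring

lemma phi_wordPrefix_div (v : ℕ → Bool) (ℓ : ℕ) :
    (phi (wordPrefix v ℓ) : ℝ) / ((2 : ℝ) ^ ℓ - 3 ^ wordHeight (wordPrefix v ℓ)) =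
      phiPartial v (Nat.count (fun n => v n = true) ℓ) /
        (1 - (2 : ℝ) ^ ℓ / 3 ^ Nat.count (fun n => v n = true) ℓ) := by
  rw [cast_phi_wordPrefix, wordHeight_wordPrefix]
  have h3 : (3 : ℝ) ^ Nat.count (fun n => v n = true) ℓ ≠ 0 := by positivity
  rw [one_sub_div h3, div_div_eq_mul_div, ← neg_sub, div_neg, neg_mul, neg_div, neg_neg, mul_comm]

lemma Nat.tendsto_count_atTop {p : ℕ → Prop} [DecidablePred p] (hp : (Set.ofPred p).Infinite) :
    Tendsto (Nat.count p) atTop atTop :=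
  (Nat.count_monotone p).tendsto_atTop_atTop fun b =>
    ⟨Nat.nth p b, (Nat.count_nth_of_infinite hp b).ge⟩

lemma tendsto_sub_succ_zero {α : Type*} [AddCommGroup α] [TopologicalSpace α]
    [IsTopologicalAddGroup α] {u : ℕ → α} {a : α} (hu : Tendsto u atTop (nhds a)) :
    Tendsto (fun n => u n - u (n + 1)) atTop (nhds 0) := by
  simpa using hu.sub (hu.comp (tendsto_add_atTop_nat 1))

lemma tendsto_two_pow_div_three_pow_count {v : ℕ → Bool} (hinf : {n | v n = true}.Infinite)
    {ζ : ℝ} (hζ : Tendsto (phiPartial v) atTop (nhds ζ)) :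
    Tendsto (fun ℓ : ℕ => (2 : ℝ) ^ ℓ / 3 ^ Nat.count (fun n => v n = true) ℓ) atTop (nhds 0) := by
  set h := Nat.count (fun n => v n = true)
  have hdiff : Tendsto (fun ℓ => 3 * (phiPartial v (h ℓ) - phiPartial v (h ℓ + 1))) atTop
      (nhds 0) := by
    simpa using ((tendsto_sub_succ_zero hζ).comp (Nat.tendsto_count_atTop hinf)).const_mul 3
  refine squeeze_zero (fun ℓ => by positivity) (fun ℓ => ?_) hdiff
  have hle : ℓ ≤ onePos v (h ℓ) := Nat.le_nth_count hinf ℓ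
  calc (2 : ℝ) ^ ℓ / 3 ^ h ℓ ≤ 2 ^ onePos v (h ℓ) / 3 ^ h ℓ := by gcongr; norm_num
    _ = 3 * (phiPartial v (h ℓ) - phiPartial v (h ℓ + 1)) := by
      rw [phiPartial_sub_phiPartial_succ, pow_succ]; field_simp

/-- If `v` is aperiodic and `Φ_ℝ(v)` converges to `ζ`, then the rational numbers
`C(u_ℓ) = φ(u_ℓ)/(2^ℓ − 3^{h(ℓ)})`, for `u_ℓ` the prefix of `v` of length `ℓ`,
converge in `ℝ` to `ζ` as `ℓ → ∞`. -/
theorem stmt15 (v : ℕ → Bool) (hv : ¬ EventuallyPeriodicWord v)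
    (ζ : ℝ) (hζ : Tendsto (phiPartial v) atTop (nhds ζ)) :
    Tendsto (fun ℓ : ℕ =>
        (phi (wordPrefix v ℓ) : ℝ) /
          ((2 : ℝ) ^ ℓ - (3 : ℝ) ^ wordHeight (wordPrefix v ℓ)))
      atTop (nhds ζ) := by
  have hinf := infinite_setOf_of_not_eventuallyPeriodicWord hv
  have hnum := hζ.comp (Nat.tendsto_count_atTop hinf)
  have hden := (tendsto_const_nhds (x := (1 : ℝ))).sub
    (tendsto_two_pow_div_three_pow_count hinf hζ)
  simp only [phi_wordPrefix_div]
  rw [sub_zero] at hden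
  have hlim := hnum.div hden one_ne_zero
  rwa [div_one] at hlim
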